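/- arXiv:1812.00862 — 7 statements merged into one kernel-verified Lean document; each statement's English description precedes it below -/
import Mathlib

section
/- The discrete Potts functional attains its minimum: there exists u* : Ω → ℝ such that P_γ(u*) ≤ P_γ(u) for every u : Ω → ℝ. -/
open Finset

/-- The discrete image domain `Ω = {0,…,M−1} × {0,…,N−1} ⊆ ℤ²`. -/
noncomputable def gridDomain (M N : ℕ) : Finset (ℤ × ℤ) :=
  (Finset.Ico (0 : ℤ) (M : ℤ)) ×ˢ (Finset.Ico (0 : ℤ) (N : ℤ))

/-- Pixels of the image domain. -/
abbrev Pix (M N : ℕ) := {p : ℤ × ℤ // p ∈ gridDomain M N}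

/-- `‖∇_a u‖₀`: the number of pixels `p ∈ Ω` with `p + a ∈ Ω` and `u (p + a) ≠ u p`. -/
noncomputable def jumpCount (M N : ℕ) (u : Pix M N → ℝ) (a : ℤ × ℤ) : ℕ :=
  Set.ncard {p : Pix M N |
    ∃ h : (p : ℤ × ℤ) + a ∈ gridDomain M N, u ⟨(p : ℤ × ℤ) + a, h⟩ ≠ u p}

/-! The regularizer depends on `u` only through its jump sets, of which there are finitely many
candidates, and it is monotone in them. For a fixed family of admissible jump sets the images
jumping only there form a linear subspace, on which the data term is a least-squares problem and
so attains its minimum. Minimizing the resulting finitely many candidate values over the families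
of jump sets gives a global minimizer. -/

theorem Finite.exists_forall_add_comp_le {X P β : Type*} [Nonempty X] [Finite P] [Preorder P]
    [AddCommMonoid β] [LinearOrder β] [IsOrderedAddMonoid β]
    (D : X → β) (σ : X → P) (r : P → β) (hr : Monotone r)
    (hmin : ∀ K, ∃ x, σ x ≤ K ∧ ∀ y, σ y ≤ K → D x ≤ D y) :
    ∃ x, ∀ y, D x + r (σ x) ≤ D y + r (σ y) := by
  choose xK hxK hminK using hmin
  have : Nonempty P := ⟨σ (Classical.arbitrary X)⟩
  obtain ⟨K₀, hK₀⟩ := Finite.exists_min fun K => D (xK K) + r K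
  refine ⟨xK K₀, fun y => ?_⟩
  calc D (xK K₀) + r (σ (xK K₀)) ≤ D (xK K₀) + r K₀ := by grw [hr (hxK K₀)]
    _ ≤ D (xK (σ y)) + r (σ y) := hK₀ (σ y)
    _ ≤ D y + r (σ y) := by grw [hminK (σ y) y le_rfl]

theorem IsClosed.exists_mem_forall_dist_le {α : Type*} [PseudoMetricSpace α] [ProperSpace α]
    {s : Set α} (hs : IsClosed s) (hne : s.Nonempty) (x : α) :
    ∃ y ∈ s, ∀ z ∈ s, dist x y ≤ dist x z := by
  obtain ⟨y, hy, hxy⟩ := hs.exists_infDist_eq_dist hne x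
  exact ⟨y, hy, fun z hz => hxy ▸ Metric.infDist_le_dist_of_mem hz⟩

theorem exists_mem_forall_sum_sq_sub_le {E ι : Type*} [AddCommGroup E] [Module ℝ E] [Fintype ι]
    (A : E →ₗ[ℝ] (ι → ℝ)) (f : ι → ℝ) (V : Submodule ℝ E) :
    ∃ v ∈ V, ∀ w ∈ V, ∑ i, (A v i - f i) ^ 2 ≤ ∑ i, (A w i - f i) ^ 2 := by
  let T : E →ₗ[ℝ] EuclideanSpace ℝ ι := (WithLp.linearEquiv 2 ℝ (ι → ℝ)).symm.toLinearMap ∘ₗ A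
  have sum_sq_eq : ∀ w, ∑ i, (A w i - f i) ^ 2 = dist (T w) (WithLp.toLp 2 f) ^ 2 := by
    intro w
    rw [EuclideanSpace.dist_eq, Real.sq_sqrt (by positivity)]
    simp [T, Real.dist_eq, sq_abs]
  obtain ⟨_, ⟨v, hv, rfl⟩, hnearest⟩ :=
    (V.map T).closed_of_finiteDimensional.exists_mem_forall_dist_le ⟨0, (V.map T).zero_mem⟩
      (WithLp.toLp 2 f)
  refine ⟨v, hv, fun w hw => ?_⟩
  rw [sum_sq_eq, sum_sq_eq, dist_comm, dist_comm (T w)]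
  gcongr
  exact hnearest _ ⟨w, hw, rfl⟩

section Jumps

variable (M N : ℕ)

/-- The support of `∇_b u`. -/
def jumpSet (u : Pix M N → ℝ) (b : ℤ × ℤ) : Set (Pix M N) :=
  {p | ∃ h : (p : ℤ × ℤ) + b ∈ gridDomain M N, u ⟨(p : ℤ × ℤ) + b, h⟩ ≠ u p}

theorem jumpCount_eq_ncard_jumpSet (u : Pix M N → ℝ) (b : ℤ × ℤ) :
    jumpCount M N u b = (jumpSet M N u b).ncard :=
  rfl

theorem jumpSet_subset_iff (u : Pix M N → ℝ) (b : ℤ × ℤ) (K : Set (Pix M N)) :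
    jumpSet M N u b ⊆ K ↔
      ∀ p ∉ K, ∀ h : (p : ℤ × ℤ) + b ∈ gridDomain M N, u ⟨(p : ℤ × ℤ) + b, h⟩ = u p := by
  constructor
  · intro hsub p hp h
    by_contra hne
    exact hp (hsub ⟨h, hne⟩)
  · rintro hK p ⟨h, hne⟩
    by_contra hp
    exact hne (hK p hp h)

def jumpsWithin {ι : Type*} (a : ι → ℤ × ℤ) (K : ι → Set (Pix M N)) :
    Submodule ℝ (Pix M N → ℝ) where
  carrier := {u | ∀ s, jumpSet M N u (a s) ⊆ K s}
  zero_mem' s := by simp [jumpSet_subset_iff]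
  add_mem' {u v} hu hv s := by
    simp_all only [Set.mem_ofPred_eq, jumpSet_subset_iff, Pi.add_apply]
    intro p hp h
    rw [hu s p hp h, hv s p hp h]
  smul_mem' c u hu s := by
    simp_all only [Set.mem_ofPred_eq, jumpSet_subset_iff, Pi.smul_apply]
    intro p hp h
    rw [hu s p hp h]

end Jumps

theorem potts_min_exists_general (M N m S : ℕ)
    (a : Fin S → ℤ × ℤ)
    (ω : Fin S → ℝ) (hω : ∀ s, 0 < ω s)
    (A : (Pix M N → ℝ) →ₗ[ℝ] (Fin m → ℝ)) (f : Fin m → ℝ)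
    (γ : ℝ) (hγ : 0 < γ) :
    ∃ ustar : Pix M N → ℝ, ∀ u : Pix M N → ℝ,
      ((∑ i, (A ustar i - f i) ^ 2) +
          γ * ∑ s, ω s * (jumpCount M N ustar (a s) : ℝ)) ≤
        (∑ i, (A u i - f i) ^ 2) +
          γ * ∑ s, ω s * (jumpCount M N u (a s) : ℝ) := by
  have penalty_mono :
      Monotone fun K : Fin S → Set (Pix M N) => γ * ∑ s, ω s * ((K s).ncard : ℝ) := by
    intro K K' hK
    dsimp only
    gcongr with s
    · exact (hω s).le
    · exact Set.toFinite _
    · exact hK s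
  simp only [jumpCount_eq_ncard_jumpSet]
  exact Finite.exists_forall_add_comp_le (fun u => ∑ i, (A u i - f i) ^ 2)
    (fun u s => jumpSet M N u (a s)) _ penalty_mono
    fun K => exists_mem_forall_sum_sq_sub_le A f (jumpsWithin M N a K)

/-- the discrete Potts functional
`P_γ(u) = ‖Au − f‖₂² + γ Σ_s ω_s ‖∇_{a_s} u‖₀` attains its minimum. -/
theorem potts_min_exists (M N m S : ℕ) (hM : 1 ≤ M) (hN : 1 ≤ N) (hS : 1 ≤ S)
    (a : Fin S → ℤ × ℤ) (ha : ∀ s, a s ≠ 0)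
    (ω : Fin S → ℝ) (hω : ∀ s, 0 < ω s)
    (A : (Pix M N → ℝ) →ₗ[ℝ] (Fin m → ℝ)) (f : Fin m → ℝ)
    (γ : ℝ) (hγ : 0 < γ) :
    ∃ ustar : Pix M N → ℝ, ∀ u : Pix M N → ℝ,
      ((∑ i, (A ustar i - f i) ^ 2) +
          γ * ∑ s, ω s * (jumpCount M N ustar (a s) : ℝ)) ≤
        (∑ i, (A u i - f i) ^ 2) +
          γ * ∑ s, ω s * (jumpCount M N u (a s) : ℝ) :=
  potts_min_exists_general M N m S a ω hω A f γ hγ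
end

section
/- For every ρ ≥ 0 and every tuple u = (u_1,…,u_S) ∈ (ℝ^N)^S, one has Σ_{s=1}^S (1/S)‖Au_s‖₂² + ρ Σ_{s=1}^S ‖u_s − u_{(s mod S)+1}‖₂² ≤ ( ‖A‖²/S + αρ ) · Σ_{s=1}^S ‖u_s‖₂², where α = 4 if S is even and α = 2 − 2cos(π(S−1)/S) if S is odd; i.e., for the cyclic nearest-neighbor coupling the corresponding block operator B has spectral norm at most (‖A‖²/S + αρ)^{1/2}. -/
/-!
The `A`-term is bounded termwise by `‖A‖² ‖u_s‖²`. For the coupling term, expand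
`Σ ‖u_s - u_{s+1}‖² = 2 Σ ‖u_s‖² - 2 Σ ⟪u_s, u_{s+1}⟫`, so it suffices to bound the cyclic
autocorrelation `Σ ⟪u_s, u_{s+1}⟫` from below by `-c Σ ‖u_s‖²`. Diagonalising the shift with the
characters `ψ` of `Fin S` gives `S Σ x_s x_{s+1} = Σ_ψ Re ψ(1) |x̂(ψ)|²` and, by Parseval,
`S Σ x_s² = Σ_ψ |x̂(ψ)|²`; hence any `c` with `-c ≤ Re ψ(1)` for all `ψ` works. Since `ψ(1)` is an
`S`-th root of unity, `c = 1` always works, and `c = cos (π / S)` works when `S` is odd, because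
then no `S`-th root of unity lies closer to `-1` than `exp (± i π (S - 1) / S)`.
-/

open Finset Real
open scoped RealInnerProductSpace

theorem neg_cos_pi_div_le_cos_two_pi_mul_div {n i : ℕ} (hn : Odd n) (hi : i < n) :
    -cos (π / n) ≤ cos (2 * π * i / n) := by
  obtain ⟨m, rfl⟩ := hn
  set j : ℤ := 2 * m + 1 - 2 * i
  have hj_pos : (1 : ℝ) ≤ |(j : ℝ)| := by
    rw [← Int.cast_abs]
    exact_mod_cast Int.one_le_abs (by omega)
  have hj_le : |(j : ℝ)| ≤ (2 * m + 1 : ℕ) := by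
    rw [← Int.cast_abs]
    exact_mod_cast abs_le.mpr ⟨by omega, by omega⟩
  have hn : (0 : ℝ) < (2 * m + 1 : ℕ) := by positivity
  have habs : |(j : ℝ)| * π / (2 * m + 1 : ℕ) = |(j : ℝ) * π / (2 * m + 1 : ℕ)| := by
    rw [abs_div, abs_mul, abs_of_pos pi_pos, abs_of_pos hn]
  have hcos : cos (2 * π * i / (2 * m + 1 : ℕ)) = -cos (|(j : ℝ)| * π / (2 * m + 1 : ℕ)) := by
    rw [habs, cos_abs, show (j : ℝ) * π / (2 * m + 1 : ℕ) = π - 2 * π * i / (2 * m + 1 : ℕ) by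
      field_simp; push_cast [j]; ring, cos_pi_sub, neg_neg]
  rw [hcos, neg_le_neg_iff]
  apply cos_le_cos_of_nonneg_of_le_pi (by positivity)
  · rw [div_le_iff₀ hn]
    nlinarith [pi_pos]
  · exact div_le_div_of_nonneg_right (by nlinarith [pi_pos]) hn.le

theorem ContinuousLinearMap.sum_norm_apply_sq_le {𝕜 ι E F : Type*} [NontriviallyNormedField 𝕜]
    [SeminormedAddCommGroup E] [SeminormedAddCommGroup F] [NormedSpace 𝕜 E] [NormedSpace 𝕜 F]
    (A : E →L[𝕜] F) (s : Finset ι) (u : ι → E) :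
    ∑ i ∈ s, ‖A (u i)‖ ^ 2 ≤ ‖A‖ ^ 2 * ∑ i ∈ s, ‖u i‖ ^ 2 := by
  rw [mul_sum]
  refine sum_le_sum fun i _ => ?_
  rw [← mul_pow]
  exact pow_le_pow_left₀ (norm_nonneg _) (A.le_opNorm (u i)) 2

namespace AddChar

variable {G : Type*} [AddCommGroup G]

theorem neg_one_le_re_apply [Finite G] (ψ : AddChar G ℂ) (x : G) : -1 ≤ (ψ x).re := by
  have h := Complex.abs_re_le_norm (ψ x)
  rw [norm_apply] at h
  linarith [neg_abs_le (ψ x).re]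

variable [Fintype G]

theorem neg_cos_pi_div_card_le_re_apply (hG : Odd (Fintype.card G)) (ψ : AddChar G ℂ) (x : G) :
    -cos (π / Fintype.card G) ≤ (ψ x).re := by
  have hpow : ψ x ^ Fintype.card G = 1 := by
    rw [← map_nsmul_eq_pow, card_nsmul_eq_zero, map_zero_eq_one]
  obtain ⟨i, hi, hψ⟩ :=
    (Complex.isPrimitiveRoot_exp _ Fintype.card_ne_zero).eq_pow_of_pow_eq_one hpow
  rw [← hψ, ← Complex.exp_nat_mul, show (i : ℂ) * (2 * π * Complex.I / Fintype.card G) =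
    ((2 * π * i / Fintype.card G : ℝ) : ℂ) * Complex.I by push_cast; ring,
    Complex.exp_ofReal_mul_I_re]
  exact neg_cos_pi_div_le_cos_two_pi_mul_div hG hi

theorem sum_mul_normSq_sum_mul (x : G → ℝ) (t : G) :
    ∑ ψ : AddChar G ℂ, ψ t * Complex.normSq (∑ a, x a * ψ a) =
      ((Fintype.card G * ∑ a, x a * x (a + t) : ℝ) : ℂ) := by
  classical
  have hexpand (ψ : AddChar G ℂ) : ψ t * Complex.normSq (∑ a, x a * ψ a) =
      ∑ a, ∑ b, ((x a * x b : ℝ) : ℂ) * ψ (t + a - b) := by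
    rw [← Complex.mul_conj, map_sum, sum_mul_sum, mul_sum]
    refine sum_congr rfl fun a _ => ?_
    rw [mul_sum]
    refine sum_congr rfl fun b _ => ?_
    rw [map_mul, Complex.conj_ofReal, ← map_neg_eq_conj, sub_eq_add_neg, map_add_eq_mul,
      map_add_eq_mul]
    push_cast
    ring
  have horth (a b : G) : ∑ ψ : AddChar G ℂ, ψ (t + a - b) =
      if a + t = b then (Fintype.card G : ℂ) else 0 := by
    rw [sum_apply_eq_ite, sub_eq_zero, add_comm t]
  simp_rw [hexpand]
  rw [sum_comm]
  simp_rw [sum_comm (γ := AddChar G ℂ), ← mul_sum, horth, mul_ite, mul_zero, sum_ite_eq,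
    mem_univ, if_true]
  push_cast
  rw [mul_sum]
  exact sum_congr rfl fun a _ => by ring

theorem neg_mul_sum_sq_le_sum_mul_add {c : ℝ} {t : G} (hc : ∀ ψ : AddChar G ℂ, -c ≤ (ψ t).re)
    (x : G → ℝ) : -c * ∑ a, x a ^ 2 ≤ ∑ a, x a * x (a + t) := by
  set F : AddChar G ℂ → ℝ := fun ψ => Complex.normSq (∑ a, x a * ψ a)
  have hcorr (s : G) :
      ∑ ψ : AddChar G ℂ, (ψ s).re * F ψ = Fintype.card G * ∑ a, x a * x (a + s) := by
    simpa using congrArg Complex.re (sum_mul_normSq_sum_mul x s)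
  have hparseval : ∑ ψ : AddChar G ℂ, F ψ = Fintype.card G * ∑ a, x a ^ 2 := by
    simpa [sq] using hcorr 0
  have hnonneg : 0 ≤ ∑ ψ : AddChar G ℂ, ((ψ t).re + c) * F ψ :=
    sum_nonneg fun ψ _ => mul_nonneg (by linarith [hc ψ]) (Complex.normSq_nonneg _)
  have hcard : (0 : ℝ) < Fintype.card G := by exact_mod_cast Fintype.card_pos
  simp_rw [add_mul, sum_add_distrib, hcorr, ← mul_sum, hparseval] at hnonneg
  nlinarith

end AddChar

section InnerProductSpace

variable {G : Type*} [AddCommGroup G] [Fintype G]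
  {E : Type*} [NormedAddCommGroup E] [InnerProductSpace ℝ E] [FiniteDimensional ℝ E]
  {c : ℝ} {t : G}

theorem neg_mul_sum_norm_sq_le_sum_inner_add (hc : ∀ ψ : AddChar G ℂ, -c ≤ (ψ t).re)
    (u : G → E) : -c * ∑ a, ‖u a‖ ^ 2 ≤ ∑ a, ⟪u a, u (a + t)⟫ := by
  set b := stdOrthonormalBasis ℝ E
  have hinner (v w : E) : ⟪v, w⟫ = ∑ i, ⟪b i, v⟫ * ⟪b i, w⟫ := by
    rw [← b.sum_inner_mul_inner v w]
    exact sum_congr rfl fun i _ => by rw [real_inner_comm]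
  calc -c * ∑ a, ‖u a‖ ^ 2 = ∑ i, -c * ∑ a, ⟪b i, u a⟫ ^ 2 := by
        simp_rw [← b.sum_sq_inner_right, ← mul_sum]
        rw [sum_comm]
    _ ≤ ∑ i, ∑ a, ⟪b i, u a⟫ * ⟪b i, u (a + t)⟫ :=
        sum_le_sum fun i _ => AddChar.neg_mul_sum_sq_le_sum_mul_add hc _
    _ = ∑ a, ⟪u a, u (a + t)⟫ := by
        rw [sum_comm]
        exact sum_congr rfl fun a _ => (hinner _ _).symm

theorem sum_norm_sub_add_sq_le (hc : ∀ ψ : AddChar G ℂ, -c ≤ (ψ t).re) (u : G → E) :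
    ∑ a, ‖u a - u (a + t)‖ ^ 2 ≤ (2 + 2 * c) * ∑ a, ‖u a‖ ^ 2 := by
  have hshift : ∑ a, ‖u (a + t)‖ ^ 2 = ∑ a, ‖u a‖ ^ 2 :=
    Fintype.sum_equiv (Equiv.addRight t) _ _ fun _ => rfl
  have hcorr := neg_mul_sum_norm_sq_le_sum_inner_add hc u
  simp_rw [norm_sub_sq_real, sum_add_distrib, sum_sub_distrib, hshift, ← mul_sum]
  linarith

end InnerProductSpace

theorem block_operator_norm_bound_cyclic_coupling_general (N m S : ℕ) [NeZero S]
    (A : EuclideanSpace ℝ (Fin N) →L[ℝ] EuclideanSpace ℝ (Fin m))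
    (ρ : ℝ) (hρ : 0 ≤ ρ)
    (u : Fin S → EuclideanSpace ℝ (Fin N)) :
    (∑ s, (1 / (S : ℝ)) * ‖A (u s)‖ ^ 2) +
        ρ * ∑ s, ‖u s - u (s + 1)‖ ^ 2 ≤
      (‖A‖ ^ 2 / (S : ℝ) +
          (if S % 2 = 0 then (4 : ℝ)
            else 2 - 2 * Real.cos (Real.pi * ((S : ℝ) - 1) / (S : ℝ))) * ρ) *
        ∑ s, ‖u s‖ ^ 2 := by
  set c : ℝ := if S % 2 = 0 then 1 else cos (π / S)
  have hc (ψ : AddChar (Fin S) ℂ) : -c ≤ (ψ 1).re := by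
    by_cases hS : S % 2 = 0
    · simpa [c, hS] using ψ.neg_one_le_re_apply 1
    · have hodd : Odd (Fintype.card (Fin S)) := by
        rw [Fintype.card_fin, Nat.odd_iff]
        omega
      simpa [c, hS] using ψ.neg_cos_pi_div_card_le_re_apply hodd 1
  have hα : (if S % 2 = 0 then (4 : ℝ) else 2 - 2 * cos (π * ((S : ℝ) - 1) / S)) = 2 + 2 * c := by
    by_cases hS : S % 2 = 0
    · simp only [c, hS, if_true]
      norm_num
    · have hS0 : (S : ℝ) ≠ 0 := Nat.cast_ne_zero.mpr (NeZero.ne S)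
      simp only [c, hS, if_false]
      rw [show π * ((S : ℝ) - 1) / S = π - π / S by field_simp, cos_pi_sub]
      ring
  have hA := A.sum_norm_apply_sq_le univ u
  calc (∑ s, (1 / (S : ℝ)) * ‖A (u s)‖ ^ 2) + ρ * ∑ s, ‖u s - u (s + 1)‖ ^ 2
      ≤ 1 / S * (‖A‖ ^ 2 * ∑ s, ‖u s‖ ^ 2) + ρ * ((2 + 2 * c) * ∑ s, ‖u s‖ ^ 2) := by
        rw [← mul_sum]
        gcongr
        exact sum_norm_sub_add_sq_le hc u
    _ = _ := by
        rw [hα]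
        ring

/-- for the cyclic nearest-neighbor coupling (coupling `u_s` with
`u_{(s mod S)+1}`) with constant parameter `ρ ≥ 0`, the corresponding block operator `B`
has spectral norm at most `(‖A‖²/S + αρ)^{1/2}`, where `α = 4` if `S` is even and
`α = 2 − 2cos(π(S−1)/S)` if `S` is odd; i.e. for every tuple `u`,
`Σ_s (1/S)‖Au_s‖² + ρ Σ_s ‖u_s − u_{s+1}‖² ≤ (‖A‖²/S + αρ) Σ_s ‖u_s‖²`
(indices understood cyclically). -/
theorem block_operator_norm_bound_cyclic_coupling (N m S : ℕ) [NeZero S]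
    (hN : 1 ≤ N) (hm : 1 ≤ m) (hS : 2 ≤ S)
    (A : EuclideanSpace ℝ (Fin N) →L[ℝ] EuclideanSpace ℝ (Fin m))
    (ρ : ℝ) (hρ : 0 ≤ ρ)
    (u : Fin S → EuclideanSpace ℝ (Fin N)) :
    (∑ s, (1 / (S : ℝ)) * ‖A (u s)‖ ^ 2) +
        ρ * ∑ s, ‖u s - u (s + 1)‖ ^ 2 ≤
      (‖A‖ ^ 2 / (S : ℝ) +
          (if S % 2 = 0 then (4 : ℝ)
            else 2 - 2 * Real.cos (Real.pi * ((S : ℝ) - 1) / (S : ℝ))) * ρ) *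
        ∑ s, ‖u s‖ ^ 2 :=
  block_operator_norm_bound_cyclic_coupling_general N m S A ρ hρ u
end

section
/- Let 𝒫 be a partitioning of Ω, i.e., a finite family of nonempty pairwise disjoint subsets (segments) covering Ω such that any two pixels of a segment can be joined by a path lying in that segment whose consecutive points differ by one of the directions a_1,…,a_S. Let 𝒜^𝒫 be the linear space of S-tuples (f_1,…,f_S) of functions Ω → ℝ such that, for each s, f_s is constant on every maximal a_s-directed discrete interval contained in a single segment of 𝒫, and let ℬ^𝒫 = {f ∈ 𝒜^𝒫 : f_1 = … = f_S}. Then the map ι(g) = (g,…,g) is a linear bijection from the space of functions g : Ω → ℝ that are constant on every segment of 𝒫 onto ℬ^𝒫. -/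
open Finset

/-- One step of a path inside `P`: both endpoints lie in `P` and they differ by one of
the directions `a_1,…,a_S`. -/
def PathStep {S : ℕ} (a : Fin S → ℤ × ℤ) (P : Finset (ℤ × ℤ)) (x y : ℤ × ℤ) : Prop :=
  x ∈ P ∧ y ∈ P ∧ ∃ s, y = x + a s ∨ x = y + a s

/-- A partitioning of `Ω`: a finite family of nonempty pairwise disjoint segments
covering `Ω`, each of which is connected via paths with steps in the directions
`a_1,…,a_S`. -/
structure Partitioning (M N S : ℕ) (a : Fin S → ℤ × ℤ) where
  segs : Finset (Finset (ℤ × ℤ))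
  seg_nonempty : ∀ P ∈ segs, P.Nonempty
  seg_disjoint : ∀ P ∈ segs, ∀ Q ∈ segs, P ≠ Q → Disjoint P Q
  seg_cover : ∀ p : ℤ × ℤ, p ∈ gridDomain M N ↔ ∃ P ∈ segs, p ∈ P
  seg_connected : ∀ P ∈ segs, ∀ x ∈ P, ∀ y ∈ P,
    Relation.ReflTransGen (PathStep a P) x y

/-- The space `𝒜^Pt`: tuples `(f_1,…,f_S)` such that each `f_s` is constant on every
`a_s`-directed discrete interval contained in a single segment of `Pt` (equivalently,
`f_s` takes the same value on any two pixels of a common segment differing by `a_s`). -/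
def Aspace (M N S : ℕ) (a : Fin S → ℤ × ℤ) (Pt : Partitioning M N S a) :
    Set (Fin S → Pix M N → ℝ) :=
  {f | ∀ s : Fin S, ∀ P ∈ Pt.segs, ∀ p q : Pix M N,
    (p : ℤ × ℤ) ∈ P → (q : ℤ × ℤ) ∈ P → (q : ℤ × ℤ) = (p : ℤ × ℤ) + a s →
      f s q = f s p}

/-- The space `ℬ^Pt = {f ∈ 𝒜^Pt : f_1 = … = f_S}`. -/
def Bspace (M N S : ℕ) (a : Fin S → ℤ × ℤ) (Pt : Partitioning M N S a) :
    Set (Fin S → Pix M N → ℝ) :=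
  {f ∈ Aspace M N S a Pt | ∀ s s' : Fin S, f s = f s'}

/-- Functions `Ω → ℝ` that are constant on every segment of `Pt`. -/
def ConstOnSegs (M N S : ℕ) (a : Fin S → ℤ × ℤ) (Pt : Partitioning M N S a) :
    Set (Pix M N → ℝ) :=
  {g | ∀ P ∈ Pt.segs, ∀ p q : Pix M N,
    (p : ℤ × ℤ) ∈ P → (q : ℤ × ℤ) ∈ P → g p = g q}

variable {M N S : ℕ} {a : Fin S → ℤ × ℤ}

theorem Partitioning.mem_gridDomain (Pt : Partitioning M N S a) {P : Finset (ℤ × ℤ)}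
    (hP : P ∈ Pt.segs) {x : ℤ × ℤ} (hx : x ∈ P) : x ∈ gridDomain M N :=
  (Pt.seg_cover x).2 ⟨P, hP, hx⟩

/-- Constancy along every `a_s`-step inside the segments propagates, by connectedness of the
segments, to constancy on whole segments. -/
theorem const_mem_Aspace_iff_mem_ConstOnSegs (Pt : Partitioning M N S a) (g : Pix M N → ℝ) :
    (fun _ : Fin S => g) ∈ Aspace M N S a Pt ↔ g ∈ ConstOnSegs M N S a Pt := by
  refine ⟨fun hg P hP p q hp hq => ?_, fun hg s P hP p q hp hq _ => hg P hP q p hq hp⟩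
  -- extend `g` to all of `ℤ²` so that it can be evaluated along paths of lattice points
  set F : ℤ × ℤ → ℝ := Function.extend Subtype.val g 0
  have hF : ∀ x : Pix M N, F x = g x := Subtype.val_injective.extend_apply g 0
  have hstep : PathStep a P ≤ Function.onFun Eq F := by
    rintro x y ⟨hx, hy, s, hxy⟩
    lift x to Pix M N using Pt.mem_gridDomain hP hx
    lift y to Pix M N using Pt.mem_gridDomain hP hy
    simp only [Function.onFun, hF]
    rcases hxy with hxy | hyx
    · exact (hg s P hP x y hx hy hxy).symm
    · exact hg s P hP y x hy hx hyx
  have hpath := (Pt.seg_connected P hP p hp q hq).lift F hstep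
  rw [Relation.reflTransGen_eq_self] at hpath
  simpa only [Function.onFun, hF] using hpath

theorem mem_Bspace_iff (Pt : Partitioning M N S a) [NeZero S] (f : Fin S → Pix M N → ℝ) :
    f ∈ Bspace M N S a Pt ↔ f 0 ∈ ConstOnSegs M N S a Pt ∧ f = fun _ => f 0 := by
  rw [← const_mem_Aspace_iff_mem_ConstOnSegs]
  constructor
  · rintro ⟨hA, hconst⟩
    have hf : f = fun _ => f 0 := funext fun s => hconst s 0
    exact ⟨hf ▸ hA, hf⟩
  · rintro ⟨hA, hf⟩
    rw [hf]
    exact ⟨hA, fun _ _ => rfl⟩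

theorem iota_linear_bijection_general (M N S : ℕ) (hS : 1 ≤ S)
    (a : Fin S → ℤ × ℤ) (Pt : Partitioning M N S a) :
    Set.BijOn (fun (g : Pix M N → ℝ) => (fun _ : Fin S => g))
        (ConstOnSegs M N S a Pt) (Bspace M N S a Pt) ∧
      (∀ g₁ g₂ : Pix M N → ℝ,
        (fun _ : Fin S => g₁ + g₂) = (fun _ : Fin S => g₁) + (fun _ : Fin S => g₂)) ∧
      (∀ (c : ℝ) (g : Pix M N → ℝ),
        (fun _ : Fin S => c • g) = c • (fun _ : Fin S => g)) := by
  have : NeZero S := ⟨by omega⟩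
  refine ⟨⟨fun g hg => ?_, fun g₁ _ g₂ _ h => congrFun h 0, fun f hf => ?_⟩,
    fun _ _ => rfl, fun _ _ => rfl⟩
  · exact (mem_Bspace_iff Pt _).2 ⟨hg, rfl⟩
  · obtain ⟨hg, hf⟩ := (mem_Bspace_iff Pt f).1 hf
    exact ⟨f 0, hg, hf.symm⟩

/-- the map `ι(g) = (g,…,g)` is a linear bijection from the space of
functions constant on every segment of `Pt` onto `ℬ^Pt`. -/
theorem iota_linear_bijection (M N S : ℕ) (hM : 1 ≤ M) (hN : 1 ≤ N) (hS : 1 ≤ S)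
    (a : Fin S → ℤ × ℤ) (ha : ∀ s, a s ≠ 0) (Pt : Partitioning M N S a) :
    Set.BijOn (fun (g : Pix M N → ℝ) => (fun _ : Fin S => g))
        (ConstOnSegs M N S a Pt) (Bspace M N S a Pt) ∧
      (∀ g₁ g₂ : Pix M N → ℝ,
        (fun _ : Fin S => g₁ + g₂) = (fun _ : Fin S => g₁) + (fun _ : Fin S => g₂)) ∧
      (∀ (c : ℝ) (g : Pix M N → ℝ),
        (fun _ : Fin S => c • g) = c • (fun _ : Fin S => g)) :=
  iota_linear_bijection_general M N S hS a Pt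
end

section
/- Let P be the orthogonal projection onto a linear subspace V ⊆ (ℝ^N)^S and let u* minimize g over V ∩ ker C. If there exists μ₀ with Cᵀμ₀ = P(∇g(u*)), then there exists μ with Cᵀμ = P(∇g(u*)) and ‖μ‖₂ ≤ 2 σ₁^{−1/2} S^{−1/2} ‖A‖ ‖f‖₂, where σ₁ is the smallest nonzero eigenvalue of CᵀC. In particular, the bound on the Lagrange multiplier μ is independent of the subspace V. -/
open Finset
open scoped RealInnerProductSpace

/-- Tuples `(u_1,…,u_S) ∈ (ℝ^N)^S`. -/
abbrev Tup (N S : ℕ) := Fin S → EuclideanSpace ℝ (Fin N)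

/-- Index set of pairs `s < s'`. -/
abbrev PairIdx (S : ℕ) := {p : Fin S × Fin S // p.1 < p.2}

/-- Elements of `(ℝ^N)^{S(S−1)/2}`, indexed by the pairs `s < s'`. -/
abbrev PTup (N S : ℕ) := PairIdx S → EuclideanSpace ℝ (Fin N)

/-- Euclidean inner product on tuples. -/
noncomputable def tinner {N S : ℕ} (x y : Tup N S) : ℝ := ∑ s, ⟪x s, y s⟫

/-- Euclidean inner product on pair-indexed tuples. -/
noncomputable def pinner {N S : ℕ} (x y : PTup N S) : ℝ := ∑ p, ⟪x p, y p⟫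


/-!
Project `μ₀` onto `(ker Cᵀ)ᗮ`: this keeps `Cᵀμ` and puts `μ` orthogonal to `ker (C Cᵀ) = ker Cᵀ`.
Since `C Cᵀ` and `CᵀC` have the same nonzero eigenvalues, diagonalising the symmetric
operator `C Cᵀ` gives `σ₁ ‖μ‖² ≤ ⟪μ, C Cᵀ μ⟫ = ‖Cᵀμ‖² = ‖P ∇g(u*)‖² ≤ ‖∇g(u*)‖²`.
Comparing `u*` with the feasible point `0` gives `Σ_s ‖A u*_s − f‖² ≤ S ‖f‖²`, hence
`‖∇g(u*)‖ ≤ (2/S) ‖A‖ (S ‖f‖²)^{1/2} = 2 ‖A‖ ‖f‖ / √S`.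
-/

open Module

section Eigenvalues

variable {K M M' : Type*} [Field K] [AddCommGroup M] [Module K M] [AddCommGroup M'] [Module K M']

theorem Module.End.hasEigenvalue_iff_exists_ne_zero {R N : Type*} [CommRing R] [AddCommGroup N]
    [Module R N] {T : N →ₗ[R] N} {μ : R} :
    End.HasEigenvalue T μ ↔ ∃ x, x ≠ 0 ∧ T x = μ • x := by
  simp only [End.hasEigenvalue_iff, Submodule.ne_bot_iff, End.mem_eigenspace_iff]
  exact ⟨fun ⟨x, hx, h0⟩ => ⟨x, h0, hx⟩, fun ⟨x, h0, hx⟩ => ⟨x, hx, h0⟩⟩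

theorem Module.End.hasEigenvalue_comp_comm {C : M →ₗ[K] M'} {Ct : M' →ₗ[K] M} {μ : K} (hμ : μ ≠ 0)
    (h : End.HasEigenvalue (C ∘ₗ Ct) μ) : End.HasEigenvalue (Ct ∘ₗ C) μ := by
  obtain ⟨y, hy0, hy⟩ := End.hasEigenvalue_iff_exists_ne_zero.1 h
  refine End.hasEigenvalue_iff_exists_ne_zero.2 ⟨Ct y, fun h0 => hy0 ?_, ?_⟩
  · simpa [h0, hμ] using hy.symm
  · simpa using congrArg Ct hy

end Eigenvalues

section Spectral

variable {E F : Type*} [NormedAddCommGroup E] [InnerProductSpace ℝ E]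
  [NormedAddCommGroup F] [InnerProductSpace ℝ F]

theorem LinearMap.IsSymmetric.mul_sq_norm_le_inner_of_mem_ker_orthogonal [FiniteDimensional ℝ E]
    {T : E →ₗ[ℝ] E} (hT : T.IsSymmetric) {σ : ℝ}
    (hσ : ∀ μ, μ ≠ 0 → End.HasEigenvalue T μ → σ ≤ μ) {x : E} (hx : x ∈ (LinearMap.ker T)ᗮ) :
    σ * ‖x‖ ^ 2 ≤ ⟪x, T x⟫ := by
  set b := hT.eigenvectorBasis rfl
  set ev := hT.eigenvalues rfl
  have hnorm : ‖x‖ ^ 2 = ∑ i, ⟪b i, x⟫ ^ 2 := by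
    rw [← real_inner_self_eq_norm_sq, ← b.sum_inner_mul_inner x x]
    simp_rw [real_inner_comm x, sq]
  have hTx : ⟪x, T x⟫ = ∑ i, ev i * ⟪b i, x⟫ ^ 2 := by
    rw [← b.sum_inner_mul_inner x (T x)]
    refine Finset.sum_congr rfl fun i _ => ?_
    rw [← hT, hT.apply_eigenvectorBasis, real_inner_smul_left, real_inner_comm x]
    simp only [RCLike.ofReal_real_eq_id, _root_.id, b, ev]
    ring
  rw [hnorm, hTx, Finset.mul_sum]
  refine Finset.sum_le_sum fun i _ => ?_
  by_cases hev : ev i = 0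
  · have hb : b i ∈ LinearMap.ker T := by
      rw [LinearMap.mem_ker, hT.apply_eigenvectorBasis]
      exact smul_eq_zero_of_left hev _
    simp [Submodule.inner_right_of_mem_orthogonal hb hx]
  · exact mul_le_mul_of_nonneg_right (hσ _ hev (hT.hasEigenvalue_eigenvalues rfl i)) (sq_nonneg _)

section AdjointPair

variable {C : E →ₗ[ℝ] F} {Ct : F →ₗ[ℝ] E} (hCt : ∀ x y, ⟪C x, y⟫ = ⟪x, Ct y⟫)
include hCt

theorem inner_apply_comp_of_adjoint (y : F) : ⟪y, C (Ct y)⟫ = ‖Ct y‖ ^ 2 := by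
  rw [real_inner_comm, hCt, real_inner_self_eq_norm_sq]

theorem isSymmetric_comp_of_adjoint : (C ∘ₗ Ct).IsSymmetric := fun x y => by
  rw [LinearMap.comp_apply, LinearMap.comp_apply, hCt, real_inner_comm (C _) x, hCt,
    real_inner_comm]

theorem ker_comp_of_adjoint : LinearMap.ker (C ∘ₗ Ct) = LinearMap.ker Ct := by
  refine le_antisymm (fun y hy => ?_) (LinearMap.ker_le_ker_comp Ct C)
  have h := inner_apply_comp_of_adjoint hCt y
  rw [show C (Ct y) = 0 from hy, inner_zero_right, eq_comm, sq_eq_zero_iff, norm_eq_zero] at h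
  exact h

theorem mul_sq_norm_le_sq_norm_of_mem_ker_orthogonal [FiniteDimensional ℝ F] {σ : ℝ}
    (hσ : ∀ μ, μ ≠ 0 → End.HasEigenvalue (Ct ∘ₗ C) μ → σ ≤ μ) {y : F}
    (hy : y ∈ (LinearMap.ker Ct)ᗮ) : σ * ‖y‖ ^ 2 ≤ ‖Ct y‖ ^ 2 := by
  rw [← inner_apply_comp_of_adjoint hCt]
  refine (isSymmetric_comp_of_adjoint hCt).mul_sq_norm_le_inner_of_mem_ker_orthogonal
    (fun μ hμ h => hσ μ hμ (End.hasEigenvalue_comp_comm hμ h)) ?_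
  rwa [ker_comp_of_adjoint hCt]

theorem exists_apply_eq_norm_le_of_adjoint [FiniteDimensional ℝ F] {σ : ℝ} (hσ₀ : 0 < σ)
    (hσ : ∀ μ, μ ≠ 0 → End.HasEigenvalue (Ct ∘ₗ C) μ → σ ≤ μ) (y₀ : F) :
    ∃ y, Ct y = Ct y₀ ∧ ‖y‖ ≤ ‖Ct y₀‖ / √σ := by
  obtain ⟨k, hk, y, hy, rfl⟩ := (LinearMap.ker Ct).exists_add_mem_mem_orthogonal y₀
  have hCty : Ct (k + y) = Ct y := by rw [map_add, LinearMap.mem_ker.1 hk, zero_add]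
  refine ⟨y, hCty.symm, ?_⟩
  rw [hCty, le_div_iff₀ (Real.sqrt_pos.2 hσ₀), ← sq_le_sq₀ (by positivity) (norm_nonneg _),
    mul_pow, Real.sq_sqrt hσ₀.le, mul_comm]
  exact mul_sq_norm_le_sq_norm_of_mem_ker_orthogonal hCt hσ hy

theorem eigenvalue_nonneg_of_adjoint {μ : ℝ} (hμ : End.HasEigenvalue (Ct ∘ₗ C) μ) : 0 ≤ μ :=
  eigenvalue_nonneg_of_nonneg hμ fun x => by simp [← hCt]

end AdjointPair

end Spectral

section Estimates

variable {E F : Type*} [NormedAddCommGroup E] [InnerProductSpace ℝ E]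
  [NormedAddCommGroup F] [InnerProductSpace ℝ F]

theorem norm_le_of_inner_sub_eq_zero {x p : E} (h : ⟪x - p, p⟫ = 0) : ‖p‖ ≤ ‖x‖ := by
  have hpyth := norm_add_sq_eq_norm_sq_add_norm_sq_real (x := p) (y := x - p)
    (by rwa [real_inner_comm])
  rw [add_sub_cancel] at hpyth
  rw [mul_self_le_mul_self_iff (norm_nonneg _) (norm_nonneg _), hpyth]
  exact le_add_of_nonneg_right (mul_self_nonneg _)

theorem norm_toLp_smul_adjoint_le [CompleteSpace E] [CompleteSpace F] {S : ℕ} (hS : 0 < S)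
    (A : E →L[ℝ] F) (f : F) (u : Fin S → E) (hu : ∑ s, ‖A (u s) - f‖ ^ 2 ≤ S * ‖f‖ ^ 2) :
    ‖WithLp.toLp 2 (fun s => (2 / (S : ℝ)) • ContinuousLinearMap.adjoint A (A (u s) - f))‖ ≤
      2 * ‖A‖ * ‖f‖ / √S := by
  have hadj (v : F) : ‖ContinuousLinearMap.adjoint A v‖ ≤ ‖A‖ * ‖v‖ :=
    (ContinuousLinearMap.adjoint A).le_of_opNorm_le (ContinuousLinearMap.adjoint.norm_map A).le v
  rw [← sq_le_sq₀ (norm_nonneg _) (by positivity), PiLp.norm_sq_eq_of_L2]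
  calc ∑ s, ‖(2 / (S : ℝ)) • ContinuousLinearMap.adjoint A (A (u s) - f)‖ ^ 2
      ≤ ∑ s, (2 / (S : ℝ)) ^ 2 * (‖A‖ * ‖A (u s) - f‖) ^ 2 := by
        gcongr with s
        rw [norm_smul, mul_pow, Real.norm_of_nonneg (by positivity)]
        gcongr
        exact hadj _
    _ = (2 / (S : ℝ)) ^ 2 * ‖A‖ ^ 2 * ∑ s, ‖A (u s) - f‖ ^ 2 := by
        rw [mul_sum]; simp_rw [mul_pow, mul_assoc]
    _ ≤ (2 / (S : ℝ)) ^ 2 * ‖A‖ ^ 2 * (S * ‖f‖ ^ 2) := by gcongr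
    _ = (2 * ‖A‖ * ‖f‖ / √S) ^ 2 := by
        rw [div_pow, div_pow, Real.sq_sqrt (Nat.cast_nonneg S)]
        field_simp

end Estimates

section Transport

variable {N S : ℕ}

/-- `Tup N S` and `PTup N S` carry Mathlib's sup norm; `toL2` moves them to `ℓ²`. -/
noncomputable def toL2 (ι E : Type*) [AddCommGroup E] [Module ℝ E] :
    (ι → E) ≃ₗ[ℝ] PiLp 2 (fun _ : ι => E) :=
  (WithLp.linearEquiv 2 ℝ (ι → E)).symm

theorem tinner_eq_inner (x y : Tup N S) : tinner x y = ⟪toL2 _ _ x, toL2 _ _ y⟫ := by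
  rw [PiLp.inner_apply]; rfl

theorem pinner_eq_inner (x y : PTup N S) : pinner x y = ⟪toL2 _ _ x, toL2 _ _ y⟫ := by
  rw [PiLp.inner_apply]; rfl

theorem exists_sqrt_pinner_le_of_adjoint {C : Tup N S →ₗ[ℝ] PTup N S}
    {Ct : PTup N S →ₗ[ℝ] Tup N S} (hCt : ∀ x y, pinner (C x) y = tinner x (Ct y)) {σ : ℝ}
    (hσ : σ ≠ 0) (hσeig : ∃ x, x ≠ 0 ∧ Ct (C x) = σ • x)
    (hσmin : ∀ μ, μ ≠ 0 → (∃ x, x ≠ 0 ∧ Ct (C x) = μ • x) → σ ≤ μ) (μ₀ : PTup N S) :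
    ∃ μ, Ct μ = Ct μ₀ ∧ √(pinner μ μ) ≤ ‖toL2 _ _ (Ct μ₀)‖ / √σ := by
  set C' := (toL2 _ _).arrowCongr (toL2 _ _) C
  set Ct' := (toL2 _ _).arrowCongr (toL2 _ _) Ct
  have hC't : ∀ x y, ⟪C' x, y⟫ = ⟪x, Ct' y⟫ := fun x y => by
    simpa [C', Ct', tinner_eq_inner, pinner_eq_inner] using
      hCt ((toL2 _ _).symm x) ((toL2 _ _).symm y)
  have heig (μ : ℝ) :
      End.HasEigenvalue (Ct' ∘ₗ C') μ ↔ ∃ x, x ≠ 0 ∧ Ct (C x) = μ • x := by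
    rw [End.hasEigenvalue_iff_exists_ne_zero, (toL2 _ _).surjective.exists]
    simp [C', Ct', ← map_smul]
  have hσ₀ : 0 < σ := (eigenvalue_nonneg_of_adjoint hC't ((heig σ).2 hσeig)).lt_of_ne' hσ
  obtain ⟨μ, hμ, hle⟩ := exists_apply_eq_norm_le_of_adjoint hC't hσ₀
    (fun μ hμ h => hσmin μ hμ ((heig μ).1 h)) (toL2 _ _ μ₀)
  refine ⟨(toL2 _ _).symm μ, ?_, ?_⟩
  · simpa [Ct'] using congrArg (toL2 _ _).symm hμ
  · rw [pinner_eq_inner, real_inner_self_eq_norm_sq, Real.sqrt_sq (norm_nonneg _)]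
    simpa [Ct'] using hle

end Transport

theorem lagrange_multiplier_bound_general (N m S : ℕ) (hS : 2 ≤ S)
    (A : EuclideanSpace ℝ (Fin N) →L[ℝ] EuclideanSpace ℝ (Fin m))
    (f : EuclideanSpace ℝ (Fin m))
    (C : Tup N S →ₗ[ℝ] PTup N S)
    (Ct : PTup N S →ₗ[ℝ] Tup N S)
    (hCt : ∀ (x : Tup N S) (y : PTup N S), pinner (C x) y = tinner x (Ct y))
    (σ₁ : ℝ) (hσnz : σ₁ ≠ 0)
    (hσeig : ∃ x : Tup N S, x ≠ 0 ∧ Ct (C x) = σ₁ • x)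
    (hσmin : ∀ μ : ℝ, μ ≠ 0 → (∃ x : Tup N S, x ≠ 0 ∧ Ct (C x) = μ • x) → σ₁ ≤ μ)
    (V : Submodule ℝ (Tup N S))
    (P : Tup N S →ₗ[ℝ] Tup N S)
    (hPrange : ∀ x, P x ∈ V)
    (hPorth : ∀ x, ∀ v ∈ V, tinner (x - P x) v = 0)
    (ustar : Tup N S)
    (hmin : ∀ v ∈ V, C v = 0 →
      (∑ s, (1 / (S : ℝ)) * ‖A (ustar s) - f‖ ^ 2) ≤
        ∑ s, (1 / (S : ℝ)) * ‖A (v s) - f‖ ^ 2)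
    (grad : Tup N S)
    (hgrad : grad = fun s => ((2 : ℝ) / (S : ℝ)) •
      (ContinuousLinearMap.adjoint A) (A (ustar s) - f))
    (μ₀ : PTup N S) (hμ₀ : Ct μ₀ = P grad) :
    ∃ μ : PTup N S, Ct μ = P grad ∧
      Real.sqrt (pinner μ μ) ≤
        2 * ‖A‖ * ‖f‖ / (Real.sqrt σ₁ * Real.sqrt (S : ℝ)) := by
  obtain ⟨μ, hμ, hμle⟩ := exists_sqrt_pinner_le_of_adjoint hCt hσnz hσeig hσmin μ₀
  have hproj : ‖toL2 _ _ (P grad)‖ ≤ ‖toL2 _ _ grad‖ := by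
    refine norm_le_of_inner_sub_eq_zero ?_
    rw [← map_sub, ← tinner_eq_inner]
    exact hPorth grad _ (hPrange grad)
  have hres : ∑ s, ‖A (ustar s) - f‖ ^ 2 ≤ S * ‖f‖ ^ 2 := by
    have h := hmin 0 V.zero_mem (map_zero C)
    simp only [Pi.zero_apply, map_zero, zero_sub, norm_neg, sum_const, card_univ,
      Fintype.card_fin, nsmul_eq_mul, ← mul_sum] at h
    rw [mul_left_comm] at h
    exact le_of_mul_le_mul_left h (one_div_pos.2 (Nat.cast_pos.2 (by omega)))
  have hgrad_le : ‖toL2 _ _ grad‖ ≤ 2 * ‖A‖ * ‖f‖ / √S := by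
    subst hgrad
    exact norm_toLp_smul_adjoint_le (by omega) A f ustar hres
  refine ⟨μ, hμ.trans hμ₀, hμle.trans ?_⟩
  rw [hμ₀, mul_comm (√σ₁), ← div_div]
  gcongr
  exact hproj.trans hgrad_le

/-- Lagrange multiplier bound.  Let `P` be the orthogonal projection onto a
linear subspace `V ⊆ (ℝ^N)^S` and let `u*` minimize `g(u) = Σ_s (1/S)‖Au_s − f‖₂²` over
`V ∩ ker C`.  If there exists `μ₀` with `Cᵀμ₀ = P(∇g(u*))`, then there exists `μ` with
`Cᵀμ = P(∇g(u*))` and `‖μ‖₂ ≤ 2 σ₁^{−1/2} S^{−1/2} ‖A‖ ‖f‖₂`, where `σ₁` is the smallest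
nonzero eigenvalue of `CᵀC`. -/
theorem lagrange_multiplier_bound (N m S : ℕ) (hN : 1 ≤ N) (hm : 1 ≤ m) (hS : 2 ≤ S)
    (A : EuclideanSpace ℝ (Fin N) →L[ℝ] EuclideanSpace ℝ (Fin m))
    (f : EuclideanSpace ℝ (Fin m))
    (c : Fin S → Fin S → ℝ) (hc : ∀ s s', 0 ≤ c s s')
    (hcnz : ∃ p : PairIdx S, c (p : Fin S × Fin S).1 (p : Fin S × Fin S).2 ≠ 0)
    (C : Tup N S →ₗ[ℝ] PTup N S)
    (hC : ∀ (u : Tup N S) (p : PairIdx S),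
      C u p = Real.sqrt (c (p : Fin S × Fin S).1 (p : Fin S × Fin S).2) •
        (u (p : Fin S × Fin S).1 - u (p : Fin S × Fin S).2))
    (Ct : PTup N S →ₗ[ℝ] Tup N S)
    (hCt : ∀ (x : Tup N S) (y : PTup N S), pinner (C x) y = tinner x (Ct y))
    (σ₁ : ℝ) (hσnz : σ₁ ≠ 0)
    (hσeig : ∃ x : Tup N S, x ≠ 0 ∧ Ct (C x) = σ₁ • x)
    (hσmin : ∀ μ : ℝ, μ ≠ 0 → (∃ x : Tup N S, x ≠ 0 ∧ Ct (C x) = μ • x) → σ₁ ≤ μ)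
    (V : Submodule ℝ (Tup N S))
    (P : Tup N S →ₗ[ℝ] Tup N S)
    (hPrange : ∀ x, P x ∈ V)
    (hPfix : ∀ v ∈ V, P v = v)
    (hPorth : ∀ x, ∀ v ∈ V, tinner (x - P x) v = 0)
    (ustar : Tup N S) (hmemV : ustar ∈ V) (hfeas : C ustar = 0)
    (hmin : ∀ v ∈ V, C v = 0 →
      (∑ s, (1 / (S : ℝ)) * ‖A (ustar s) - f‖ ^ 2) ≤
        ∑ s, (1 / (S : ℝ)) * ‖A (v s) - f‖ ^ 2)
    (grad : Tup N S)
    (hgrad : grad = fun s => ((2 : ℝ) / (S : ℝ)) •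
      (ContinuousLinearMap.adjoint A) (A (ustar s) - f))
    (μ₀ : PTup N S) (hμ₀ : Ct μ₀ = P grad) :
    ∃ μ : PTup N S, Ct μ = P grad ∧
      Real.sqrt (pinner μ μ) ≤
        2 * ‖A‖ * ‖f‖ / (Real.sqrt σ₁ * Real.sqrt (S : ℝ)) :=
  lagrange_multiplier_bound_general N m S hS A f C Ct hCt σ₁ hσnz hσeig hσmin V P hPrange hPorth
    ustar hmin grad hgrad μ₀ hμ₀
end

section
/- Let (u^k)_{k∈ℕ} be a sequence in H satisfying the surrogate iteration condition F^surr(u^{k+1}, u^k) ≤ F^surr(u, u^k) for all u ∈ H and all k ∈ ℕ. Then the sequence of functional values is nonincreasing, F(u^{k+1}) ≤ F(u^k) for all k, and the distance between consecutive iterates tends to zero: ‖u^{k+1} − u^k‖ → 0 as k → ∞. -/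
open Filter

/-- for `F(u) = ‖Xu − z‖² + γJ(u)` with `‖X‖ < 1` and the surrogate
`F^surr(u,v) = F(u) + ‖u − v‖² − ‖Xu − Xv‖²`, any sequence `(u^k)` satisfying the
surrogate iteration condition `F^surr(u^{k+1}, u^k) ≤ F^surr(u, u^k)` for all `u`
has nonincreasing functional values `F(u^{k+1}) ≤ F(u^k)` and
`‖u^{k+1} − u^k‖ → 0`. -/
theorem surrogate_iteration_decrease_and_step_to_zero {H K : Type*}
    [NormedAddCommGroup H] [InnerProductSpace ℝ H] [FiniteDimensional ℝ H]
    [NormedAddCommGroup K] [InnerProductSpace ℝ K] [FiniteDimensional ℝ K]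
    (X : H →L[ℝ] K) (hX : ‖X‖ < 1) (z : K) (γ : ℝ) (hγ : 0 < γ)
    (J : H → ℝ) (hJ0 : ∀ u, 0 ≤ J u) (hJlsc : LowerSemicontinuous J)
    (F Fsurr : _) (hF : F = fun u : H => ‖X u - z‖ ^ 2 + γ * J u)
    (hFsurr : Fsurr = fun (u v : H) => F u + ‖u - v‖ ^ 2 - ‖X u - X v‖ ^ 2)
    (u : ℕ → H)
    (hiter : ∀ k : ℕ, ∀ w : H, Fsurr (u (k + 1)) (u k) ≤ Fsurr w (u k)) :
    (∀ k : ℕ, F (u (k + 1)) ≤ F (u k)) ∧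
      Tendsto (fun k : ℕ => ‖u (k + 1) - u k‖) atTop (nhds 0) := by
  have hXn : 0 ≤ ‖X‖ := norm_nonneg X
  set c : ℝ := 1 - ‖X‖ ^ 2 with hc
  have hcpos : 0 < c := by nlinarith
  have hXle : ∀ v w : H, ‖X v - X w‖ ^ 2 ≤ ‖X‖ ^ 2 * ‖v - w‖ ^ 2 := by
    intro v w
    rw [← map_sub]
    have h := X.le_opNorm (v - w)
    nlinarith [norm_nonneg (X (v - w)), norm_nonneg (v - w)]
  have key : ∀ k, F (u (k + 1)) + c * ‖u (k + 1) - u k‖ ^ 2 ≤ F (u k) := by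
    intro k
    have h1 := hiter k (u k)
    simp only [hFsurr, sub_self, norm_zero] at h1
    have h2 := hXle (u (k + 1)) (u k)
    nlinarith [norm_nonneg (u (k + 1) - u k)]
  have hF0 : ∀ v, 0 ≤ F v := by
    intro v; rw [hF]
    have := hJ0 v
    positivity
  have hdec : ∀ k, F (u (k + 1)) ≤ F (u k) := by
    intro k
    have := key k
    nlinarith [norm_nonneg (u (k + 1) - u k), hcpos.le,
      mul_nonneg hcpos.le (sq_nonneg ‖u (k + 1) - u k‖)]
  refine ⟨hdec, ?_⟩
  have hsum : ∀ n, ∑ i ∈ Finset.range n, ‖u (i + 1) - u i‖ ^ 2 ≤ F (u 0) / c := by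
    intro n
    have htel : c * ∑ i ∈ Finset.range n, ‖u (i + 1) - u i‖ ^ 2 ≤ F (u 0) - F (u n) := by
      rw [Finset.mul_sum]
      induction n with
      | zero => simp
      | succ m ih =>
        rw [Finset.sum_range_succ]
        have := key m
        linarith
    have := hF0 (u n)
    rw [le_div_iff₀ hcpos]
    nlinarith
  have hsummable : Summable (fun k => ‖u (k + 1) - u k‖ ^ 2) :=
    summable_of_sum_range_le (fun k => sq_nonneg _) hsum
  have hsq : Tendsto (fun k : ℕ => ‖u (k + 1) - u k‖ ^ 2) atTop (nhds 0) :=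
    hsummable.tendsto_atTop_zero
  have := (Real.continuous_sqrt.tendsto 0).comp hsq
  simp only [Real.sqrt_zero] at this
  convert this using 2 with k
  simp [Function.comp, Real.sqrt_sq (norm_nonneg _)]
end

section
/- Let c > 0 and let (u^{(n)})_{n∈ℕ}, with u^{(n)} = (u^{(n)}_1,…,u^{(n)}_S), be a sequence of S-tuples of functions Ω → ℝ such that (a) for every n, every s and every pixel p with p+a_s ∈ Ω, either u^{(n)}_s(p+a_s) = u^{(n)}_s(p) or |u^{(n)}_s(p+a_s) − u^{(n)}_s(p)| ≥ c, and (b) ‖u^{(n+1)} − u^{(n)}‖₂ → 0 as n → ∞. Then the induced jump patterns eventually become constant: there is N₀ ∈ ℕ such that for all n ≥ N₀, { (s,p) : p+a_s ∈ Ω and u^{(n)}_s(p+a_s) ≠ u^{(n)}_s(p) } = { (s,p) : p+a_s ∈ Ω and u^{(N₀)}_s(p+a_s) ≠ u^{(N₀)}_s(p) }. -/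
open Finset Filter

/-- The jump pattern of a tuple `u = (u_1,…,u_S)`: the pairs `(s,p)` such that `u_s`
jumps in direction `a_s` at pixel `p`. -/
def jumpPattern (M N S : ℕ) (a : Fin S → ℤ × ℤ) (u : Fin S → Pix M N → ℝ) :
    Set (Fin S × Pix M N) :=
  {sp | ∃ h : (sp.2 : ℤ × ℤ) + a sp.1 ∈ gridDomain M N,
    u sp.1 ⟨(sp.2 : ℤ × ℤ) + a sp.1, h⟩ ≠ u sp.1 sp.2}

/-!
Once consecutive iterates differ by less than `c / 2` at every pixel, a jump of height
`≥ c` cannot appear or disappear between them: the difference across an edge changes by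
less than `c`. The pointwise bound follows from `‖u^{(n+1)} − u^{(n)}‖₂ → 0`.
-/

theorem abs_le_sqrt_sum_sum_sq {ι κ : Type*} [Fintype ι] [Fintype κ] (x : ι → κ → ℝ)
    (i : ι) (j : κ) : |x i j| ≤ √(∑ i, ∑ j, x i j ^ 2) :=
  Real.abs_le_sqrt <| calc
    x i j ^ 2 ≤ ∑ j, x i j ^ 2 := single_le_sum (fun _ _ => sq_nonneg _) (mem_univ j)
    _ ≤ ∑ i, ∑ j, x i j ^ 2 :=
      single_le_sum (fun _ _ => sum_nonneg fun _ _ => sq_nonneg _) (mem_univ i)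

theorem eq_of_eq_of_abs_sub_lt_half {c x y x' y' : ℝ} (h' : x' = y' ∨ c ≤ |x' - y'|)
    (hxy : x = y) (hx : |x' - x| < c / 2) (hy : |y' - y| < c / 2) : x' = y' := by
  refine h'.resolve_right fun hc => ?_
  subst hxy
  have := abs_sub_le x' x y'
  rw [abs_sub_comm x y'] at this
  linarith

theorem eq_iff_eq_of_abs_sub_lt_half {c x y x' y' : ℝ} (h : x = y ∨ c ≤ |x - y|)
    (h' : x' = y' ∨ c ≤ |x' - y'|) (hx : |x' - x| < c / 2) (hy : |y' - y| < c / 2) :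
    x = y ↔ x' = y' :=
  ⟨fun hxy => eq_of_eq_of_abs_sub_lt_half h' hxy hx hy, fun hxy =>
    eq_of_eq_of_abs_sub_lt_half h hxy (by rwa [abs_sub_comm]) (by rwa [abs_sub_comm])⟩

def HasMinJumpHeight (M N S : ℕ) (a : Fin S → ℤ × ℤ) (c : ℝ) (u : Fin S → Pix M N → ℝ) :
    Prop :=
  ∀ (s : Fin S) (p : Pix M N) (hq : (p : ℤ × ℤ) + a s ∈ gridDomain M N),
    u s ⟨(p : ℤ × ℤ) + a s, hq⟩ = u s p ∨ c ≤ |u s ⟨(p : ℤ × ℤ) + a s, hq⟩ - u s p|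

theorem jumpPattern_eq_of_abs_sub_lt_half {M N S : ℕ} {a : Fin S → ℤ × ℤ} {c : ℝ}
    {u v : Fin S → Pix M N → ℝ} (hu : HasMinJumpHeight M N S a c u)
    (hv : HasMinJumpHeight M N S a c v) (huv : ∀ s p, |v s p - u s p| < c / 2) :
    jumpPattern M N S a v = jumpPattern M N S a u := by
  ext ⟨s, p⟩
  exact exists_congr fun hq => not_congr
    (eq_iff_eq_of_abs_sub_lt_half (hu s p hq) (hv s p hq) (huv s _) (huv s p)).symm

theorem jump_patterns_eventually_constant_general (M N S : ℕ)
    (a : Fin S → ℤ × ℤ)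
    (c : ℝ) (hc : 0 < c)
    (u : ℕ → Fin S → Pix M N → ℝ)
    (hjump : ∀ (n : ℕ) (s : Fin S) (p : Pix M N)
      (hq : (p : ℤ × ℤ) + a s ∈ gridDomain M N),
      u n s ⟨(p : ℤ × ℤ) + a s, hq⟩ = u n s p ∨
        c ≤ |u n s ⟨(p : ℤ × ℤ) + a s, hq⟩ - u n s p|)
    (hstep : Tendsto
      (fun n : ℕ => Real.sqrt (∑ s, ∑ p, (u (n + 1) s p - u n s p) ^ 2))
      atTop (nhds 0)) :
    ∃ N₀ : ℕ, ∀ n ≥ N₀,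
      jumpPattern M N S a (u n) = jumpPattern M N S a (u N₀) := by
  have hsmall : ∀ᶠ n in atTop, ∀ s p, |u (n + 1) s p - u n s p| < c / 2 :=
    (hstep.eventually (eventually_lt_nhds (half_pos hc))).mono fun n hn s p =>
      (abs_le_sqrt_sum_sum_sq (fun s p => u (n + 1) s p - u n s p) s p).trans_lt hn
  have hconst : EventuallyConst (fun n => jumpPattern M N S a (u n)) atTop :=
    eventuallyConst_atTop_nat.2 <| eventually_atTop.1 <| hsmall.mono fun n hn =>
      jumpPattern_eq_of_abs_sub_lt_half (hjump n) (hjump (n + 1)) hn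
  exact eventuallyConst_atTop.1 hconst

/-- if all tuples of a sequence have minimal directional jump height
`c > 0` and consecutive iterates satisfy `‖u^{(n+1)} − u^{(n)}‖₂ → 0`, then the induced
jump patterns eventually become constant. -/
theorem jump_patterns_eventually_constant (M N S : ℕ)
    (hM : 1 ≤ M) (hN : 1 ≤ N) (hS : 1 ≤ S)
    (a : Fin S → ℤ × ℤ) (ha : ∀ s, a s ≠ 0)
    (c : ℝ) (hc : 0 < c)
    (u : ℕ → Fin S → Pix M N → ℝ)
    (hjump : ∀ (n : ℕ) (s : Fin S) (p : Pix M N)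
      (hq : (p : ℤ × ℤ) + a s ∈ gridDomain M N),
      u n s ⟨(p : ℤ × ℤ) + a s, hq⟩ = u n s p ∨
        c ≤ |u n s ⟨(p : ℤ × ℤ) + a s, hq⟩ - u n s p|)
    (hstep : Tendsto
      (fun n : ℕ => Real.sqrt (∑ s, ∑ p, (u (n + 1) s p - u n s p) ^ 2))
      atTop (nhds 0)) :
    ∃ N₀ : ℕ, ∀ n ≥ N₀,
      jumpPattern M N S a (u n) = jumpPattern M N S a (u N₀) :=
  jump_patterns_eventually_constant_general M N S a c hc u hjump hstep
end

section
/- If u* ∈ H is a global minimizer of F, then u* is the unique minimizer of the map v ↦ F^surr(v, u*); in particular, F^surr(v, u*) > F^surr(u*, u*) = F(u*) for every v ≠ u*. Consequently, every global minimizer of F is a fixed point of the surrogate iteration v ↦ argmin_u F^surr(u, v). -/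
/-- if `u*` is a global minimizer of `F(u) = ‖Xu − z‖² + γJ(u)` (with
`‖X‖ < 1`), then `u*` is the unique minimizer of `v ↦ F^surr(v, u*)`:
`F^surr(v, u*) ≥ F(u*)` for all `v`, `F^surr(v, u*) > F^surr(u*, u*)` for every
`v ≠ u*`, and `F^surr(u*, u*) = F(u*)`.  Consequently `u*` is a fixed point of the
surrogate iteration `v ↦ argmin_u F^surr(u, v)`. -/
theorem global_minimizer_is_surrogate_fixed_point {H K : Type*}
    [NormedAddCommGroup H] [InnerProductSpace ℝ H] [FiniteDimensional ℝ H]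
    [NormedAddCommGroup K] [InnerProductSpace ℝ K] [FiniteDimensional ℝ K]
    (X : H →L[ℝ] K) (hX : ‖X‖ < 1) (z : K) (γ : ℝ) (hγ : 0 < γ)
    (J : H → ℝ) (hJ0 : ∀ u, 0 ≤ J u) (hJlsc : LowerSemicontinuous J)
    (F Fsurr : _) (hF : F = fun u : H => ‖X u - z‖ ^ 2 + γ * J u)
    (hFsurr : Fsurr = fun (u v : H) => F u + ‖u - v‖ ^ 2 - ‖X u - X v‖ ^ 2)
    (ustar : H) (hglobal : ∀ u : H, F ustar ≤ F u) :
    (∀ v : H, F ustar ≤ Fsurr v ustar) ∧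
      (∀ v : H, v ≠ ustar → Fsurr ustar ustar < Fsurr v ustar) ∧
      Fsurr ustar ustar = F ustar := by
  subst hFsurr
  have hXn : ∀ v : H, ‖X v - X ustar‖ ≤ ‖X‖ * ‖v - ustar‖ := by
    intro v; rw [← map_sub]; exact X.le_opNorm _
  have key : ∀ v : H, ‖X v - X ustar‖ ^ 2 ≤ ‖v - ustar‖ ^ 2 := by
    intro v
    have hb : ‖X‖ * ‖v - ustar‖ ≤ ‖v - ustar‖ := by
      nlinarith [norm_nonneg (v - ustar)]
    exact pow_le_pow_left₀ (norm_nonneg _) ((hXn v).trans hb) 2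
  refine ⟨?_, ?_, ?_⟩
  · intro v
    have h1 := hglobal v
    have h2 := key v
    dsimp only
    linarith
  · intro v hv
    have hne : 0 < ‖v - ustar‖ := by
      rw [norm_pos_iff]; exact sub_ne_zero.mpr hv
    have hstrict : ‖X v - X ustar‖ ^ 2 < ‖v - ustar‖ ^ 2 := by
      have hb : ‖X‖ * ‖v - ustar‖ < ‖v - ustar‖ := by nlinarith
      exact pow_lt_pow_left₀ ((hXn v).trans_lt hb) (norm_nonneg _) (by norm_num)
    have h2 := hglobal v
    dsimp only
    simp only [sub_self, norm_zero, map_sub]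
    nlinarith
  · dsimp only; simp
end
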